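/- Let H = H⁽²⁾(a) = [[2-ia, -1], [-1, 2+ia]] with a ∈ ℝ, and let Θ(k,m) = [[k, km - ika], [km + ika, k]] with k, m ∈ ℝ. Then Θ(k,m) is Hermitian and satisfies the Dieudonné relation H† Θ = Θ H. -/

import Mathlib

open Matrix Complex

noncomputable def H2 (a : ℝ) : Matrix (Fin 2) (Fin 2) ℂ :=
  !![2 - a * Complex.I, -1; -1, 2 + a * Complex.I]

noncomputable def Theta2 (a k m : ℝ) : Matrix (Fin 2) (Fin 2) ℂ :=
  !![(k : ℂ), k * m - k * a * Complex.I; k * m + k * a * Complex.I, (k : ℂ)]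

theorem conjTranspose_H2 (a : ℝ) : (H2 a)ᴴ = H2 (-a) := by
  ext i j
  fin_cases i <;> fin_cases j <;> simp [H2, sub_eq_add_neg]

theorem isHermitian_Theta2 (a k m : ℝ) : (Theta2 a k m).IsHermitian := by
  ext i j
  fin_cases i <;> fin_cases j <;> simp [Theta2, sub_eq_add_neg]

/-- Once `H2ᴴ` is written as `H2 (-a)`, the relation is a polynomial identity in `a, k, m, I`:
`I ^ 2` appears with the same coefficient on both sides, so `I ^ 2 = -1` is never needed. -/
theorem conjTranspose_H2_mul_Theta2 (a k m : ℝ) :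
    (H2 a)ᴴ * Theta2 a k m = Theta2 a k m * H2 a := by
  rw [conjTranspose_H2, H2, H2, Theta2, mul_fin_two, mul_fin_two]
  push_cast
  ring_nf

theorem Theta2_hermitian_dieudonne (a k m : ℝ) :
    (Theta2 a k m).IsHermitian ∧ (H2 a)ᴴ * Theta2 a k m = Theta2 a k m * H2 a :=
  ⟨isHermitian_Theta2 a k m, conjTranspose_H2_mul_Theta2 a k m⟩
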